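/- Let T = q1³(3q1+q2)p1²/(q1−q2) + q2³(q1+3q2)p2²/(q2−q1) and K = (q1^{3/2}q2^{3/2}/(q1−q2)²)(q1²p1−q2²p2)(q1^{3/2}p1−q2^{3/2}p2)(q1^{3/2}p1+q2^{3/2}p2). Then {T,K} = 0 identically on the open set where 0 < q2 < q1 (so all square roots are defined and q1 ≠ q2). -/

import Mathlib

/-- Canonical Poisson bracket of two functions on phase space (q1,q2,p1,p2). -/
noncomputable def pb (f g : ℝ → ℝ → ℝ → ℝ → ℝ) (q1 q2 p1 p2 : ℝ) : ℝ :=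
  (deriv (fun x => f x q2 p1 p2) q1) * (deriv (fun x => g q1 q2 x p2) p1)
  - (deriv (fun x => f q1 q2 x p2) p1) * (deriv (fun x => g x q2 p1 p2) q1)
  + (deriv (fun x => f q1 x p1 p2) q2) * (deriv (fun x => g q1 q2 p1 x) p2)
  - (deriv (fun x => f q1 q2 p1 x) p2) * (deriv (fun x => g q1 x p1 p2) q2)

noncomputable def T (q1 q2 p1 p2 : ℝ) : ℝ :=
  q1^3 * (3*q1 + q2) * p1^2 / (q1 - q2) + q2^3 * (q1 + 3*q2) * p2^2 / (q2 - q1)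

noncomputable def K (q1 q2 p1 p2 : ℝ) : ℝ :=
  (q1 * Real.sqrt q1 * q2 * Real.sqrt q2 / (q1 - q2)^2)
  * (q1^2*p1 - q2^2*p2)
  * (q1 * Real.sqrt q1 * p1 - q2 * Real.sqrt q2 * p2)
  * (q1 * Real.sqrt q1 * p1 + q2 * Real.sqrt q2 * p2)

set_option maxHeartbeats 4000000 in
theorem stmt4 (q1 q2 p1 p2 : ℝ) (h1 : 0 < q2) (h2 : q2 < q1) :
    pb T K q1 q2 p1 p2 = 0 := by
  have h0 : 0 < q1 := h1.trans h2
  obtain ⟨s1, hs1, hq1⟩ : ∃ s, 0 < s ∧ q1 = s^2 :=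
    ⟨Real.sqrt q1, Real.sqrt_pos.2 h0, (Real.sq_sqrt h0.le).symm⟩
  obtain ⟨s2, hs2, hq2⟩ : ∃ s, 0 < s ∧ q2 = s^2 :=
    ⟨Real.sqrt q2, Real.sqrt_pos.2 h1, (Real.sq_sqrt h1.le).symm⟩
  subst hq1 hq2
  have hlt : s2 < s1 := by nlinarith
  have hne1 : s1^2 - s2^2 ≠ 0 := by nlinarith
  have hne2 : s2^2 - s1^2 ≠ 0 := by nlinarith
  have hne1' : (s1^2 - s2^2)^2 ≠ 0 := pow_ne_zero 2 hne1
  have hs1ne : (s1:ℝ)^2 ≠ 0 := by positivity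
  have hs2ne : (s2:ℝ)^2 ≠ 0 := by positivity
  simp only [pb, T, K, Real.sqrt_sq hs1.le, Real.sqrt_sq hs2.le]
  -- sqrt derivatives
  have hS1 : HasDerivAt (fun x : ℝ => x * Real.sqrt x) _ (s1^2) :=
    (hasDerivAt_id (s1^2)).mul (Real.hasDerivAt_sqrt hs1ne)
  have hS2 : HasDerivAt (fun x : ℝ => x * Real.sqrt x) _ (s2^2) :=
    (hasDerivAt_id (s2^2)).mul (Real.hasDerivAt_sqrt hs2ne)
  -- dT/dq1
  have d1 : HasDerivAt (fun x : ℝ =>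
      x ^ 3 * (3 * x + s2^2) * p1 ^ 2 / (x - s2^2)
      + (s2^2) ^ 3 * (x + 3 * s2^2) * p2 ^ 2 / (s2^2 - x)) _ (s1^2) :=
    HasDerivAt.add
      (HasDerivAt.div
        (((hasDerivAt_pow 3 (s1^2)).mul
          (((hasDerivAt_id (s1^2)).const_mul 3).add_const (s2^2))).mul_const (p1^2))
        ((hasDerivAt_id (s1^2)).sub_const (s2^2)) hne1)
      (HasDerivAt.div
        ((((hasDerivAt_id (s1^2)).add_const (3*s2^2)).const_mul ((s2^2)^3)).mul_const (p2^2))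
        ((hasDerivAt_id (s1^2)).const_sub (s2^2)) hne2)
  -- dT/dq2
  have d2 : HasDerivAt (fun x : ℝ =>
      (s1^2) ^ 3 * (3 * s1^2 + x) * p1 ^ 2 / (s1^2 - x)
      + x ^ 3 * (s1^2 + 3 * x) * p2 ^ 2 / (x - s1^2)) _ (s2^2) :=
    HasDerivAt.add
      (HasDerivAt.div
        ((((hasDerivAt_id (s2^2)).const_add (3*s1^2)).const_mul ((s1^2)^3)).mul_const (p1^2))
        ((hasDerivAt_id (s2^2)).const_sub (s1^2)) hne1)
      (HasDerivAt.div
        (((hasDerivAt_pow 3 (s2^2)).mul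
          (((hasDerivAt_id (s2^2)).const_mul 3).const_add (s1^2))).mul_const (p2^2))
        ((hasDerivAt_id (s2^2)).sub_const (s1^2)) hne2)
  -- dT/dp1
  have d3 : HasDerivAt (fun x : ℝ =>
      (s1^2) ^ 3 * (3 * s1^2 + s2^2) * x ^ 2 / (s1^2 - s2^2)
      + (s2^2) ^ 3 * (s1^2 + 3 * s2^2) * p2 ^ 2 / (s2^2 - s1^2)) _ p1 :=
    (((hasDerivAt_pow 2 p1).const_mul ((s1^2)^3 * (3 * s1^2 + s2^2))).div_const
      (s1^2 - s2^2)).add_const ((s2^2)^3 * (s1^2 + 3 * s2^2) * p2^2 / (s2^2 - s1^2))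
  -- dT/dp2
  have d4 : HasDerivAt (fun x : ℝ =>
      (s1^2) ^ 3 * (3 * s1^2 + s2^2) * p1 ^ 2 / (s1^2 - s2^2)
      + (s2^2) ^ 3 * (s1^2 + 3 * s2^2) * x ^ 2 / (s2^2 - s1^2)) _ p2 :=
    ((((hasDerivAt_pow 2 p2).const_mul ((s2^2)^3 * (s1^2 + 3 * s2^2))).div_const
      (s2^2 - s1^2)).const_add ((s1^2)^3 * (3 * s1^2 + s2^2) * p1^2 / (s1^2 - s2^2)))
  -- dK/dq1
  have d5 : HasDerivAt (fun x : ℝ =>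
      x * Real.sqrt x * s2^2 * s2 / (x - s2^2)^2
      * (x^2 * p1 - (s2^2)^2 * p2)
      * (x * Real.sqrt x * p1 - s2^2 * s2 * p2)
      * (x * Real.sqrt x * p1 + s2^2 * s2 * p2)) _ (s1^2) :=
    (((((hS1.mul_const (s2^2)).mul_const s2).div
        (((hasDerivAt_id (s1^2)).sub_const (s2^2)).pow 2) (pow_ne_zero 2 hne1)).mul
      (((hasDerivAt_pow 2 (s1^2)).mul_const p1).sub_const ((s2^2)^2 * p2))).mul
      ((hS1.mul_const p1).sub_const (s2^2 * s2 * p2))).mul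
      ((hS1.mul_const p1).add_const (s2^2 * s2 * p2))
  -- dK/dq2
  have d6 : HasDerivAt (fun x : ℝ =>
      s1^2 * s1 * x * Real.sqrt x / (s1^2 - x)^2
      * ((s1^2)^2 * p1 - x^2 * p2)
      * (s1^2 * s1 * p1 - x * Real.sqrt x * p2)
      * (s1^2 * s1 * p1 + x * Real.sqrt x * p2)) _ (s2^2) :=
    ((((((hasDerivAt_id (s2^2)).const_mul (s1^2 * s1)).mul
          (Real.hasDerivAt_sqrt hs2ne)).div
        (((hasDerivAt_id (s2^2)).const_sub (s1^2)).pow 2)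
        hne1').mul
      (((hasDerivAt_pow 2 (s2^2)).mul_const p2).const_sub ((s1^2)^2 * p1))).mul
      ((hS2.mul_const p2).const_sub (s1^2 * s1 * p1))).mul
      ((hS2.mul_const p2).const_add (s1^2 * s1 * p1))
  -- dK/dp1
  have d7 : HasDerivAt (fun x : ℝ =>
      s1^2 * s1 * s2^2 * s2 / (s1^2 - s2^2)^2
      * ((s1^2)^2 * x - (s2^2)^2 * p2)
      * (s1^2 * s1 * x - s2^2 * s2 * p2)
      * (s1^2 * s1 * x + s2^2 * s2 * p2)) _ p1 :=
    (((hasDerivAt_const p1 (s1^2 * s1 * s2^2 * s2 / (s1^2 - s2^2)^2)).mul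
      (((hasDerivAt_id p1).const_mul ((s1^2)^2)).sub_const ((s2^2)^2 * p2))).mul
      (((hasDerivAt_id p1).const_mul (s1^2 * s1)).sub_const (s2^2 * s2 * p2))).mul
      (((hasDerivAt_id p1).const_mul (s1^2 * s1)).add_const (s2^2 * s2 * p2))
  -- dK/dp2
  have d8 : HasDerivAt (fun x : ℝ =>
      s1^2 * s1 * s2^2 * s2 / (s1^2 - s2^2)^2
      * ((s1^2)^2 * p1 - (s2^2)^2 * x)
      * (s1^2 * s1 * p1 - s2^2 * s2 * x)
      * (s1^2 * s1 * p1 + s2^2 * s2 * x)) _ p2 :=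
    (((hasDerivAt_const p2 (s1^2 * s1 * s2^2 * s2 / (s1^2 - s2^2)^2)).mul
      (((hasDerivAt_id p2).const_mul ((s2^2)^2)).const_sub ((s1^2)^2 * p1))).mul
      (((hasDerivAt_id p2).const_mul (s2^2 * s2)).const_sub (s1^2 * s1 * p1))).mul
      (((hasDerivAt_id p2).const_mul (s2^2 * s2)).const_add (s1^2 * s1 * p1))
  rw [d1.deriv, d2.deriv, d3.deriv, d4.deriv, d5.deriv, d6.deriv, d7.deriv, d8.deriv]
  simp only [Pi.mul_apply, Pi.div_apply, Pi.pow_apply, Real.sqrt_sq hs1.le, Real.sqrt_sq hs2.le, id_eq]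
  have hs1ne' : s1 ≠ 0 := ne_of_gt hs1
  have hs2ne' : s2 ≠ 0 := ne_of_gt hs2
  field_simp
  ring
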